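/- arXiv:1808.02251 — 2 statements merged into one kernel-verified Lean document; each statement's English description precedes it below -/
import Mathlib

section
/- If c^λ_{μν} are the coefficients in the expansion g_{λ/μ} = Σ_ν c^λ_{μν} g_ν of a skew dual stable Grothendieck polynomial in the g-basis, then Σ_ν c^λ_{μν} = 1 for all μ ⊆ λ. -/
/- Common combinatorial definitions: partitions (as weakly decreasing, eventually
zero functions ℕ → ℕ), skew shapes, cells, and reverse plane partitions. -/

open scoped Classical

noncomputable section

/-- `f : ℕ → ℕ` is a partition: weakly decreasing and eventually zero. -/
def IsPartition (f : ℕ → ℕ) : Prop :=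
  (∀ ⦃i j : ℕ⦄, i ≤ j → f j ≤ f i) ∧ ∃ N, ∀ n, N ≤ n → f n = 0

/-- the empty partition -/
def zeroPart : ℕ → ℕ := fun _ => 0

/-- containment of Young diagrams: `μ ⊆ λ`. -/
def SubShape (μ lam : ℕ → ℕ) : Prop := ∀ i, μ i ≤ lam i

/-- `(i, j)` is a cell (row `i`, column `j`, 0-indexed) of the skew shape `λ/μ`. -/
def Cell (μ lam : ℕ → ℕ) (i j : ℕ) : Prop := μ i ≤ j ∧ j < lam i

/-- A reverse plane partition of shape `λ/μ`: entries are positive integers on the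
cells of `λ/μ` (recorded as `0` off the shape), weakly increasing along each row and
each column. -/
def IsRPP (μ lam : ℕ → ℕ) (T : ℕ → ℕ → ℕ) : Prop :=
  (∀ i j, Cell μ lam i j → 1 ≤ T i j) ∧
  (∀ i j, ¬ Cell μ lam i j → T i j = 0) ∧
  (∀ i j, Cell μ lam i j → Cell μ lam i (j + 1) → T i j ≤ T i (j + 1)) ∧
  (∀ i j, Cell μ lam i j → Cell μ lam (i + 1) j → T i j ≤ T (i + 1) j)

variable (K : Type*) [CommRing K]

/-- number of columns of the reverse plane partition `T` (of shape `λ/μ`) containing `k`. -/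
def colCount (μ lam : ℕ → ℕ) (T : ℕ → ℕ → ℕ) (k : ℕ) : ℕ :=
  Set.ncard {j : ℕ | ∃ i, Cell μ lam i j ∧ T i j = k}

/-- `c(λ/μ)`: the number of nonempty columns of the skew shape `λ/μ`. -/
def nCols (μ lam : ℕ → ℕ) : ℕ := Set.ncard {j : ℕ | ∃ i, Cell μ lam i j}

/-- `|λ/μ|`: the number of boxes of the skew shape `λ/μ`. -/
def skewSize (μ lam : ℕ → ℕ) : ℕ := ∑ᶠ i : ℕ, (lam i - μ i)

/-- The dual stable Grothendieck polynomial `g_{λ/μ} = Σ_T x^T`, as a formal power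
series in the variables `x_0, x_1, x_2, …`: the coefficient of the monomial `x^d`
is the number of reverse plane partitions `T` of shape `λ/μ` such that, for every
`k`, the number of columns of `T` containing the entry `k + 1` is `d k`. -/
def gP (μ lam : ℕ → ℕ) : MvPowerSeries ℕ K :=
  fun d => (Nat.card {T : ℕ → ℕ → ℕ //
    IsRPP μ lam T ∧ ∀ k : ℕ, colCount μ lam T (k + 1) = d k} : K)

/-! Specialize to one variable: `g_{λ/μ}(x₀, 0, 0, …) = x₀ ^ c(λ/μ)`, because an entry `k + 1`
of a reverse plane partition makes `x_k` divide its weight, so the only one of weight a power of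
`x₀` is the filling by ones. Setting moreover `x₀ = 1`, realized as the linear functional summing
the coefficients of `1, x₀, …, x₀ ^ (M - 1)` for `M` large, sends every `g` in the expansion to
`1`, hence `Σ_ν c^λ_{μν} = 1`. -/

def onesFilling (μ lam : ℕ → ℕ) : ℕ → ℕ → ℕ := fun i j => if Cell μ lam i j then 1 else 0

lemma isRPP_onesFilling (μ lam : ℕ → ℕ) : IsRPP μ lam (onesFilling μ lam) := by
  refine ⟨fun i j h => ?_, fun i j h => ?_, fun i j h h' => ?_, fun i j h h' => ?_⟩ <;>
    simp [onesFilling, *]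

lemma colCount_onesFilling (μ lam : ℕ → ℕ) (k : ℕ) :
    colCount μ lam (onesFilling μ lam) k = if k = 1 then nCols μ lam else 0 := by
  unfold colCount nCols
  split_ifs with hk
  · subst hk
    congr 1
    ext j
    simp +contextual [onesFilling]
  · convert Set.ncard_empty ℕ
    ext j
    simp only [Set.mem_empty_iff_false, iff_false]
    rintro ⟨i, hc, hT⟩
    simp [onesFilling, hc, eq_comm, hk] at hT

lemma setOf_exists_cell_subset_Iio {μ lam : ℕ → ℕ} (hlam : Antitone lam) :
    {j | ∃ i, Cell μ lam i j} ⊆ Set.Iio (lam 0) :=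
  fun _ ⟨i, hc⟩ => hc.2.trans_le (hlam (Nat.zero_le i))

lemma colCount_pos_of_cell {μ lam : ℕ → ℕ} (hlam : Antitone lam) (T : ℕ → ℕ → ℕ) {i j : ℕ}
    (hc : Cell μ lam i j) : 0 < colCount μ lam T (T i j) :=
  (Set.ncard_pos ((Set.finite_Iio (lam 0)).subset fun _ hj =>
    setOf_exists_cell_subset_Iio hlam (hj.imp fun _ => And.left))).mpr ⟨j, i, hc, rfl⟩

lemma isRPP_and_colCount_eq_single_iff {μ lam : ℕ → ℕ} (hlam : Antitone lam)
    (T : ℕ → ℕ → ℕ) (m : ℕ) :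
    (IsRPP μ lam T ∧ ∀ k, colCount μ lam T (k + 1) = Finsupp.single 0 m k) ↔
      T = onesFilling μ lam ∧ m = nCols μ lam := by
  constructor
  · rintro ⟨hT, hcol⟩
    have hone : ∀ i j, Cell μ lam i j → T i j = 1 := by
      intro i j hc
      obtain ⟨k, hk⟩ := Nat.exists_eq_add_of_le (hT.1 i j hc)
      rcases Nat.eq_zero_or_pos k with rfl | hkpos
      · exact hk
      · have hpos := colCount_pos_of_cell hlam T hc
        rw [hk, add_comm, hcol k, Finsupp.single_eq_of_ne hkpos.ne'] at hpos
        exact absurd hpos (lt_irrefl 0)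
    have hT1 : T = onesFilling μ lam := by
      funext i j
      by_cases hc : Cell μ lam i j
      · simp [onesFilling, hc, hone i j hc]
      · simp [onesFilling, hc, hT.2.1 i j hc]
    refine ⟨hT1, ?_⟩
    simpa [hT1, colCount_onesFilling] using (hcol 0).symm
  · rintro ⟨rfl, rfl⟩
    refine ⟨isRPP_onesFilling μ lam, fun k => ?_⟩
    rcases Nat.eq_zero_or_pos k with rfl | hk
    · simp [colCount_onesFilling]
    · simp [colCount_onesFilling, Finsupp.single_eq_of_ne hk.ne', hk.ne']

lemma coeff_single_zero_gP {μ lam : ℕ → ℕ} (hlam : Antitone lam) (m : ℕ) :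
    MvPowerSeries.coeff (Finsupp.single 0 m) (gP K μ lam) =
      if m = nCols μ lam then 1 else 0 := by
  rw [MvPowerSeries.coeff_apply, gP,
    Nat.card_congr (Equiv.subtypeEquivRight (isRPP_and_colCount_eq_single_iff hlam · m))]
  split_ifs with hm <;> simp [hm]

lemma sum_coeff_single_zero_gP {μ lam : ℕ → ℕ} (hlam : Antitone lam) {M : ℕ}
    (hM : nCols μ lam < M) :
    (∑ m ∈ Finset.range M, MvPowerSeries.coeff (Finsupp.single 0 m)) (gP K μ lam) = 1 := by
  simp [LinearMap.sum_apply, coeff_single_zero_gP K hlam, hM]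

theorem sum_skew_expansion_coefficients (μ lam : ℕ → ℕ)
    (hlam : IsPartition lam)
    (c : (ℕ → ℕ) → K)
    (hfin : (Function.support c).Finite)
    (hpart : ∀ ν, c ν ≠ 0 → IsPartition ν)
    (hexp : gP K μ lam = ∑ᶠ ν : ℕ → ℕ, c ν • gP K zeroPart ν) :
    (∑ᶠ ν : ℕ → ℕ, c ν) = 1 := by
  set M := (hfin.toFinset.sup fun ν => nCols zeroPart ν) ⊔ nCols μ lam + 1
  set L := ∑ m ∈ Finset.range M, MvPowerSeries.coeff (R := K) (Finsupp.single 0 m)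
  have hL : ∀ ν, c ν • L (gP K zeroPart ν) = c ν := by
    intro ν
    by_cases hν : c ν = 0
    · simp [hν]
    · have hle : nCols zeroPart ν ≤ hfin.toFinset.sup fun ν => nCols zeroPart ν :=
        Finset.le_sup (f := fun ν => nCols zeroPart ν) (by simpa using hν)
      rw [sum_coeff_single_zero_gP K (hpart ν hν).1 (by omega), smul_eq_mul, mul_one]
  calc ∑ᶠ ν, c ν = ∑ᶠ ν, c ν • L (gP K zeroPart ν) := finsum_congr fun ν => (hL ν).symm
    _ = L (gP K μ lam) := by
      simpa [hexp] using (L.toAddMonoidHom.map_finsum (f := fun ν => c ν • gP K zeroPart ν)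
        (hfin.subset (Function.support_smul_subset_left c (gP K zeroPart)))).symm
    _ = 1 := sum_coeff_single_zero_gP K hlam.1 (by omega)
end
end

section
/- In the incidence algebra of Young's lattice, the element i_t(μ,λ) = t^{c(λ/μ)} has two-sided inverse j_t given by j_t(μ,λ) = (−1)^{|λ/μ|} t^{c(λ/μ)} (t−1)^{|λ/μ|−c(λ/μ)} if λ/μ is a vertical strip and 0 otherwise; i.e., Σ_{μ⊆ν⊆λ} i_t(μ,ν) j_t(ν,λ) = δ_{μλ} for all μ ⊆ λ. -/
/- Common combinatorial definitions: partitions (as weakly decreasing, eventually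
zero functions ℕ → ℕ), skew shapes, cells, and reverse plane partitions. -/

open scoped Classical

noncomputable section

variable (K : Type*) [CommRing K]

/-- `λ/μ` is a vertical strip: at most one box in each row. -/
def VertStrip (μ lam : ℕ → ℕ) : Prop :=
  SubShape μ lam ∧ ∀ i, lam i ≤ μ i + 1

/-- the element `j_t` of the incidence algebra of Young's lattice:
`j_t(μ,λ) = (−1)^{|λ/μ|} t^{c(λ/μ)} (t−1)^{|λ/μ|−c(λ/μ)}` if `λ/μ` is a vertical
strip, and `0` otherwise. -/
def jt (t : K) (μ lam : ℕ → ℕ) : K :=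
  if VertStrip μ lam then
    (-1 : K) ^ skewSize μ lam * t ^ nCols μ lam *
      (t - 1) ^ (skewSize μ lam - nCols μ lam)
  else 0

/-!
Only `ν` with `μ ⊆ ν ⊆ λ` and `λ/ν` a vertical strip contribute to `Σ_ν i_t(μ,ν) j_t(ν,λ)`.
If `μ ≠ λ`, let `J` be the last column of `λ/μ`; its cells fill rows `a ≤ i < b`, where
`λ_i = J + 1`. For a contributing `ν` these rows have `ν_i ∈ {J, J + 1}`, so `ν` is fixed by its
other rows and by the row `e ∈ [a, b]` where it drops from `J + 1` to `J`, and all `b - a + 1`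
choices of `e` contribute. Along such a fibre only column `J` moves between `ν/μ` and `λ/ν`, so
the summand is a constant times a weight depending on `y = b - e` alone: `t` for `y = 0`,
`-t²(1-t)^(y-1)` for `0 < y < b - a` and `-t(1-t)^(y-1)` for `y = b - a`, which sum to zero by
the geometric series. This proves `i_t j_t = δ`; on the finite interval `[μ, λ]` a one-sided
inverse of a matrix is two-sided, which gives `j_t i_t = δ`.
-/

lemma IsPartition.finite_support {f : ℕ → ℕ} (hf : IsPartition f) :
    (Function.support f).Finite := by
  obtain ⟨N, hN⟩ := hf.2
  refine (Set.finite_Iio N).subset fun i hi => ?_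
  by_contra h
  exact hi (hN i (not_lt.1 h))

lemma SubShape.trans {α β γ : ℕ → ℕ} (h₁ : SubShape α β) (h₂ : SubShape β γ) : SubShape α γ :=
  fun i => (h₁ i).trans (h₂ i)

lemma SubShape.antisymm {α β : ℕ → ℕ} (h₁ : SubShape α β) (h₂ : SubShape β α) : α = β :=
  funext fun i => le_antisymm (h₁ i) (h₂ i)

lemma finite_setOf_cell (α : ℕ → ℕ) {β : ℕ → ℕ} (hβ : Antitone β) :
    {j | ∃ i, Cell α β i j}.Finite :=
  (Set.finite_Iio (β 0)).subset fun _ ⟨_, _, hj⟩ => hj.trans_le (hβ (Nat.zero_le _))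

lemma nCols_self (α : ℕ → ℕ) : nCols α α = 0 := by
  simp only [nCols, Cell]
  convert Set.ncard_empty ℕ
  ext j
  simp only [Set.mem_ofPred_eq, Set.mem_empty_iff_false, iff_false]
  omega

lemma skewSize_self (α : ℕ → ℕ) : skewSize α α = 0 := by
  simp [skewSize]

lemma skewSize_add {α β γ : ℕ → ℕ} (hαβ : SubShape α β) (hβγ : SubShape β γ)
    (hγ : (Function.support γ).Finite) :
    skewSize α γ = skewSize α β + skewSize β γ := by
  have hsupp : ∀ δ ε : ℕ → ℕ, SubShape ε γ → (Function.support fun i => ε i - δ i).Finite :=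
    fun δ ε hε => hγ.subset fun i hi hγi => hi <| show ε i - δ i = 0 by
      have := hε i
      omega
  unfold skewSize
  rw [← finsum_add_distrib (hsupp α β hβγ) (hsupp β γ fun _ => le_rfl)]
  exact finsum_congr fun i => by have := hαβ i; have := hβγ i; omega

lemma skewSize_eq_ncard {α β : ℕ → ℕ} (h : ∀ i, β i ≤ α i + 1) :
    skewSize α β = {i | α i < β i}.ncard := by
  rw [← finsum_one, finsum_mem_def]
  refine finsum_congr fun i => ?_
  have := h i
  by_cases hi : α i < β i
  · rw [Set.indicator_of_mem (show i ∈ {i | α i < β i} from hi)]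
    omega
  · rw [Set.indicator_of_notMem (show i ∉ {i | α i < β i} from hi)]
    omega

lemma cell_iff_of_vertStrip {α β : ℕ → ℕ} (h : VertStrip α β) (i j : ℕ) :
    Cell α β i j ↔ α i < β i ∧ j = α i := by
  have := h.2 i
  unfold Cell
  omega

lemma nCols_le_skewSize {α β : ℕ → ℕ} (h : VertStrip α β) (hβ : (Function.support β).Finite) :
    nCols α β ≤ skewSize α β := by
  have hcols : {j | ∃ i, Cell α β i j} = α '' {i | α i < β i} := by
    ext j
    simp only [cell_iff_of_vertStrip h, Set.mem_ofPred_eq, Set.mem_image]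
    exact exists_congr fun i => by rw [eq_comm]
  rw [nCols, hcols, skewSize_eq_ncard h.2]
  exact Set.ncard_image_le (hβ.subset fun i hi h0 => by simp only [Set.mem_ofPred_eq] at hi; omega)

lemma finite_setOf_subShape {β : ℕ → ℕ} (hβ : (Function.support β).Finite) :
    {α | SubShape α β}.Finite := by
  refine Set.Finite.of_finite_image (f := fun α (i : hβ.toFinset) => α i)
    ((Set.Finite.pi (t := fun i : hβ.toFinset => Set.Iic (β i)) fun _ => Set.finite_Iic _).subset
      ?_) ?_
  · rintro _ ⟨α, hα, rfl⟩ i -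
    exact hα i
  · intro α hα α' hα' h
    funext i
    by_cases hi : i ∈ Function.support β
    · exact congrFun h ⟨i, by simpa using hi⟩
    · have := hα i
      have := hα' i
      simp only [Function.mem_support, not_not] at hi
      omega

lemma finsum_ite_eq_sum_toFinset {α M : Type*} [AddCommMonoid M] {p : α → Prop}
    [DecidablePred p] (hp : {x | p x}.Finite) (f : α → M) :
    ∑ᶠ x, (if p x then f x else 0) = ∑ x ∈ hp.toFinset, f x := by
  rw [← finsum_mem_eq_finite_toFinset_sum, finsum_mem_def]
  exact finsum_congr fun x => by simp [Set.indicator_apply]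

lemma sum_mul_eq_ite_of_sum_mul_eq_ite {α R : Type*} [CommRing R] [DecidableEq α]
    {I : Finset α} {f g : α → α → R}
    (h : ∀ x ∈ I, ∀ y ∈ I, ∑ z ∈ I, f x z * g z y = if x = y then 1 else 0)
    {x y : α} (hx : x ∈ I) (hy : y ∈ I) :
    ∑ z ∈ I, g x z * f z y = if x = y then 1 else 0 := by
  let A : Matrix I I R := fun x y => f x y
  let B : Matrix I I R := fun x y => g x y
  have hAB : A * B = 1 := by
    ext x y
    rw [Matrix.mul_apply, Finset.sum_coe_sort I (fun z => f x z * g z y), h x x.2 y y.2,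
      Matrix.one_apply]
    simp only [Subtype.ext_iff]
  have hBA := congrFun (congrFun ((mul_eq_one_comm (M := Matrix I I R)).1 hAB) ⟨x, hx⟩) ⟨y, hy⟩
  rw [Matrix.mul_apply, Finset.sum_coe_sort I (fun z => g x z * f z y), Matrix.one_apply] at hBA
  simpa only [Subtype.ext_iff] using hBA

lemma Antitone.exists_threshold {f : ℕ → ℕ} (hf : Antitone f) {J a b : ℕ} (hab : a ≤ b)
    (h : ∀ i, a ≤ i → i < b → f i = J ∨ f i = J + 1) :
    ∃ e, a ≤ e ∧ e ≤ b ∧ ∀ i, a ≤ i → i < b → f i = if i < e then J + 1 else J := by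
  induction b, hab using Nat.le_induction with
  | base => exact ⟨a, le_rfl, le_rfl, fun i h₁ h₂ => by omega⟩
  | succ b hab ih =>
    obtain ⟨e, hae, heb, he⟩ := ih fun i h₁ h₂ => h i h₁ (by omega)
    rcases h b hab (by omega) with hb | hb
    · refine ⟨e, hae, by omega, fun i h₁ h₂ => ?_⟩
      rcases (show i < b ∨ i = b by omega) with hi | rfl
      · exact he i h₁ hi
      · rw [if_neg (by omega), hb]
    · refine ⟨b + 1, by omega, le_rfl, fun i h₁ h₂ => ?_⟩
      have := hf (show i ≤ b by omega)
      rw [if_pos h₂]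
      rcases h i h₁ h₂ with hi | hi <;> omega

def it (t : K) (μ lam : ℕ → ℕ) : K :=
  if SubShape μ lam then t ^ nCols μ lam else 0

variable {K}

/-- The factor contributed by the last column of `λ/μ`, of `n` cells, to `i_t(μ,ν) j_t(ν,λ)`
when `y` of these cells lie in `λ/ν`. -/
def columnWeight (t : K) (n y : ℕ) : K :=
  (-1) ^ y * t ^ ((if y < n then 1 else 0) + if 0 < y then 1 else 0) *
    (t - 1) ^ (y - if 0 < y then 1 else 0)

lemma sum_range_columnWeight (t : K) {n : ℕ} (hn : 0 < n) :
    ∑ y ∈ Finset.range (n + 1), columnWeight t n y = 0 := by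
  obtain ⟨m, rfl⟩ : ∃ m, n = m + 1 := ⟨n - 1, by omega⟩
  have hmid : ∀ y ∈ Finset.range m,
      columnWeight t (m + 1) (y + 1) = -t ^ 2 * ((-1) ^ y * (t - 1) ^ y) := by
    intro y hy
    rw [columnWeight, if_pos (by simpa using hy), if_pos y.succ_pos, Nat.add_sub_cancel]
    ring
  have hgeom := geom_sum_mul (-(t - 1)) m
  simp only [neg_pow (t - 1)] at hgeom
  rw [Finset.sum_range_succ, Finset.sum_range_succ', Finset.sum_congr rfl hmid, ← Finset.mul_sum]
  simp only [columnWeight, lt_add_iff_pos_left, Order.lt_add_one_iff, zero_le, lt_self_iff_false,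
    ↓reduceIte, add_zero, zero_add, tsub_self, add_tsub_cancel_right, pow_zero, pow_one, one_mul,
    mul_one]
  linear_combination t * hgeom

lemma subShape_and_vertStrip_of_it_mul_jt_ne_zero {t : K} {μ ν lam : ℕ → ℕ}
    (h : it K t μ ν * jt K t ν lam ≠ 0) : SubShape μ ν ∧ VertStrip ν lam := by
  unfold it jt at h
  split_ifs at h with h₁ h₂
  · exact ⟨h₁, h₂⟩
  all_goals simp at h

lemma it_mul_jt_self (t : K) (μ : ℕ → ℕ) : it K t μ μ * jt K t μ μ = 1 := by
  simp [it, jt, VertStrip, SubShape, nCols_self, skewSize_self]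

/-- Column `J` is the last nonempty column of `λ/μ`, and its cells lie in rows `a ≤ i < b`. -/
structure IsLastColumn (μ lam : ℕ → ℕ) (J a b : ℕ) : Prop where
  lt : a < b
  lt_of_lt_left : ∀ i, i < a → J < μ i
  le_of_left_le : ∀ i, a ≤ i → μ i ≤ J
  le_of_right_le : ∀ i, b ≤ i → lam i ≤ J
  eq_succ : ∀ i, a ≤ i → i < b → lam i = J + 1

lemma exists_isLastColumn {μ lam : ℕ → ℕ} (hμ : IsPartition μ) (hlam : IsPartition lam)
    (hsub : SubShape μ lam) (hne : μ ≠ lam) : ∃ J a b, IsLastColumn μ lam J a b := by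
  have hcols : {j | ∃ i, Cell μ lam i j}.Nonempty := by
    obtain ⟨i, hi⟩ : ∃ i, μ i < lam i := by
      by_contra! h
      exact hne (hsub.antisymm h)
    exact ⟨μ i, i, le_rfl, hi⟩
  obtain ⟨J, ⟨i₀, hi₀⟩, hJ⟩ := Set.exists_max_image _ id (finite_setOf_cell μ hlam.1) hcols
  have hrow : ∃ i, lam i ≤ J := by
    obtain ⟨N, hN⟩ := hlam.2
    exact ⟨N, by rw [hN N le_rfl]; omega⟩
  have ha : ∃ i, μ i ≤ J := ⟨i₀, hi₀.1⟩
  refine ⟨J, Nat.find ha, Nat.find hrow, ?_, fun i hi => ?_, fun i hi => ?_, fun i hi => ?_,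
    fun i h₁ h₂ => ?_⟩
  · have h₁ := Nat.find_min' ha hi₀.1
    have h₂ : i₀ < Nat.find hrow := by
      by_contra! h
      have := hlam.1 h
      have := Nat.find_spec hrow
      have := hi₀.2
      omega
    omega
  · exact not_le.1 (Nat.find_min ha hi)
  · exact (hμ.1 hi).trans (Nat.find_spec ha)
  · exact (hlam.1 hi).trans (Nat.find_spec hrow)
  · have := not_le.1 (Nat.find_min hrow h₂)
    have := (hμ.1 h₁).trans (Nat.find_spec ha)
    have : lam i ≤ J + 1 := by
      by_contra! h
      exact absurd (hJ (J + 1) ⟨i, by omega, h⟩) (by simp)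
    omega

def fillColumn (ν : ℕ → ℕ) (J a b e : ℕ) : ℕ → ℕ := fun i =>
  if a ≤ i ∧ i < b then (if i < e then J + 1 else J) else ν i

lemma fillColumn_fillColumn (ν : ℕ → ℕ) (J a b e e' : ℕ) :
    fillColumn (fillColumn ν J a b e) J a b e' = fillColumn ν J a b e' := by
  funext i
  simp only [fillColumn]
  split_ifs <;> rfl

lemma injOn_fillColumn_sub (ν : ℕ → ℕ) (J a b : ℕ) :
    Set.InjOn (fun y => fillColumn ν J a b (b - y)) (Finset.range (b - a + 1)) := by
  have hne : ∀ y₁ y₂, y₁ < y₂ → y₂ ≤ b - a →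
      fillColumn ν J a b (b - y₁) ≠ fillColumn ν J a b (b - y₂) := fun y₁ y₂ h₁₂ h₂ h => by
    have := congrFun h (b - y₂)
    simp only [fillColumn] at this
    split_ifs at this <;> omega
  intro y₁ hy₁ y₂ hy₂ h
  simp only [Finset.coe_range, Set.mem_Iio] at hy₁ hy₂
  by_contra h₁₂
  rcases Nat.lt_or_gt_of_ne h₁₂ with hlt | hlt
  · exact hne y₁ y₂ hlt (by omega) h
  · exact hne y₂ y₁ hlt (by omega) h.symm

section fillColumn

variable {μ lam ν : ℕ → ℕ} {J a b : ℕ}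

lemma isPartition_fillColumn (hL : IsLastColumn μ lam J a b) (hν : IsPartition ν)
    (hμν : SubShape μ ν) (hνlam : SubShape ν lam) (e : ℕ) :
    IsPartition (fillColumn ν J a b e) := by
  constructor
  · intro i j hij
    have h₁ : i < a → J < ν i := fun h => (hL.lt_of_lt_left i h).trans_le (hμν i)
    have h₂ : b ≤ j → ν j ≤ J := fun h => (hνlam j).trans (hL.le_of_right_le j h)
    have h₃ := hν.1 hij
    simp only [fillColumn]
    split_ifs <;> omega
  · obtain ⟨N, hN⟩ := hν.2
    refine ⟨max N b, fun i hi => ?_⟩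
    simp only [fillColumn]
    rw [if_neg (by omega), hN i (by omega)]

lemma subShape_fillColumn (hL : IsLastColumn μ lam J a b) (hμν : SubShape μ ν) (e : ℕ) :
    SubShape μ (fillColumn ν J a b e) := fun i => by
  have := hL.le_of_left_le i
  have := hμν i
  simp only [fillColumn]
  split_ifs <;> omega

lemma vertStrip_fillColumn (hL : IsLastColumn μ lam J a b) (h : VertStrip ν lam) (e : ℕ) :
    VertStrip (fillColumn ν J a b e) lam := by
  refine ⟨fun i => ?_, fun i => ?_⟩ <;>
  · have := hL.eq_succ i
    have := h.1 i
    have := h.2 i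
    simp only [fillColumn]
    split_ifs <;> omega

lemma exists_fillColumn_eq (hL : IsLastColumn μ lam J a b) (hν : IsPartition ν)
    (h : VertStrip ν lam) : ∃ e, a ≤ e ∧ e ≤ b ∧ fillColumn ν J a b e = ν := by
  obtain ⟨e, hae, heb, he⟩ := Antitone.exists_threshold (J := J) hν.1 hL.lt.le fun i h₁ h₂ => by
    have := hL.eq_succ i h₁ h₂
    have := h.1 i
    have := h.2 i
    omega
  refine ⟨e, hae, heb, funext fun i => ?_⟩
  by_cases hi : a ≤ i ∧ i < b
  · rw [fillColumn, if_pos hi, he i hi.1 hi.2]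
  · rw [fillColumn, if_neg hi]

lemma nCols_fillColumn_left (hL : IsLastColumn μ lam J a b) (hν : IsPartition ν)
    (hμν : SubShape μ ν) (hνlam : SubShape ν lam) (e : ℕ) :
    nCols μ (fillColumn ν J a b e) = nCols μ (fillColumn ν J a b a) + if a < e then 1 else 0 := by
  split_ifs with hae
  · have hcols : {j | ∃ i, Cell μ (fillColumn ν J a b e) i j} =
        insert J {j | ∃ i, Cell μ (fillColumn ν J a b a) i j} := by
      ext j
      simp only [Set.mem_ofPred_eq, Set.mem_insert_iff, Cell, fillColumn]
      constructor
      · rintro ⟨i, h₁, h₂⟩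
        by_cases hj : j = J
        · exact Or.inl hj
        · refine Or.inr ⟨i, h₁, ?_⟩
          split_ifs at h₂ ⊢ <;> omega
      · rintro (rfl | ⟨i, h₁, h₂⟩)
        · exact ⟨a, hL.le_of_left_le a le_rfl, by rw [if_pos ⟨le_rfl, hL.lt⟩, if_pos hae]; omega⟩
        · refine ⟨i, h₁, ?_⟩
          split_ifs at h₂ ⊢ <;> omega
    have hJ : J ∉ {j | ∃ i, Cell μ (fillColumn ν J a b a) i j} := by
      rintro ⟨i, h₁, h₂⟩
      have := hL.lt_of_lt_left i
      have := hL.le_of_right_le i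
      have := hνlam i
      simp only [fillColumn] at h₂
      split_ifs at h₂ <;> omega
    rw [nCols, nCols, hcols, Set.ncard_insert_of_notMem hJ
      (finite_setOf_cell μ (isPartition_fillColumn hL hν hμν hνlam a).1)]
  · rw [add_zero]
    congr 1
    funext i
    simp only [fillColumn]
    split_ifs <;> omega

lemma nCols_fillColumn_right (hL : IsLastColumn μ lam J a b) (hlam : IsPartition lam)
    (hμν : SubShape μ ν) {e : ℕ} (hae : a ≤ e) :
    nCols (fillColumn ν J a b e) lam =
      nCols (fillColumn ν J a b b) lam + if e < b then 1 else 0 := by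
  split_ifs with heb
  · have hcols : {j | ∃ i, Cell (fillColumn ν J a b e) lam i j} =
        insert J {j | ∃ i, Cell (fillColumn ν J a b b) lam i j} := by
      ext j
      simp only [Set.mem_ofPred_eq, Set.mem_insert_iff, Cell, fillColumn]
      constructor
      · rintro ⟨i, h₁, h₂⟩
        by_cases hj : j = J
        · exact Or.inl hj
        · have := hL.eq_succ i
          refine Or.inr ⟨i, ?_, h₂⟩
          split_ifs at h₁ ⊢ <;> omega
      · rintro (rfl | ⟨i, h₁, h₂⟩)
        · exact ⟨e, by rw [if_pos ⟨hae, heb⟩, if_neg (lt_irrefl e)], by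
            rw [hL.eq_succ e hae heb]; omega⟩
        · have := hL.eq_succ i
          refine ⟨i, ?_, h₂⟩
          split_ifs at h₁ ⊢ <;> omega
    have hJ : J ∉ {j | ∃ i, Cell (fillColumn ν J a b b) lam i j} := by
      rintro ⟨i, h₁, h₂⟩
      have := hL.lt_of_lt_left i
      have := hL.le_of_right_le i
      have := hL.eq_succ i
      have := hμν i
      simp only [fillColumn] at h₁
      split_ifs at h₁ <;> omega
    rw [nCols, nCols, hcols, Set.ncard_insert_of_notMem hJ (finite_setOf_cell _ hlam.1)]
  · rw [add_zero]
    congr 1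
    funext i
    simp only [fillColumn]
    split_ifs <;> omega

lemma skewSize_fillColumn (hL : IsLastColumn μ lam J a b) (hlam : IsPartition lam)
    (h : VertStrip ν lam) {e : ℕ} (hae : a ≤ e) :
    skewSize (fillColumn ν J a b e) lam = skewSize (fillColumn ν J a b b) lam + (b - e) := by
  have hle : SubShape (fillColumn ν J a b e) (fillColumn ν J a b b) := fun i => by
    simp only [fillColumn]
    split_ifs <;> omega
  have hrows : {i | fillColumn ν J a b e i < fillColumn ν J a b b i} = Set.Ico e b := by
    ext i
    simp only [Set.mem_ofPred_eq, Set.mem_Ico, fillColumn]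
    split_ifs <;> omega
  rw [skewSize_add hle (vertStrip_fillColumn hL h b).1 hlam.finite_support, add_comm,
    skewSize_eq_ncard (α := fillColumn ν J a b e) fun i => by
      simp only [fillColumn]; split_ifs <;> omega, hrows,
    Set.ncard_Ico_nat]

lemma filter_fillColumn_eq_image (hL : IsLastColumn μ lam J a b) {G : Finset (ℕ → ℕ)}
    (hG : ∀ ν, ν ∈ G ↔ IsPartition ν ∧ SubShape μ ν ∧ VertStrip ν lam) (hν : ν ∈ G) :
    {ν' ∈ G | fillColumn ν' J a b b = fillColumn ν J a b b} =
      (Finset.range (b - a + 1)).image fun y => fillColumn ν J a b (b - y) := by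
  obtain ⟨hνp, hμν, hνlam⟩ := (hG ν).1 hν
  ext ν'
  simp only [Finset.mem_filter, Finset.mem_image, Finset.mem_range, hG]
  constructor
  · rintro ⟨⟨hp, -, hvs⟩, hfill⟩
    obtain ⟨e, hae, heb, he⟩ := exists_fillColumn_eq hL hp hvs
    refine ⟨b - e, by omega, ?_⟩
    rw [show b - (b - e) = e by omega, ← fillColumn_fillColumn ν J a b b e, ← hfill,
      fillColumn_fillColumn, he]
  · rintro ⟨y, -, rfl⟩
    exact ⟨⟨isPartition_fillColumn hL hνp hμν hνlam.1 _, subShape_fillColumn hL hμν _,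
      vertStrip_fillColumn hL hνlam _⟩, fillColumn_fillColumn ..⟩

lemma sum_range_it_mul_jt_fillColumn (t : K) (hL : IsLastColumn μ lam J a b)
    (hlam : IsPartition lam) (hν : IsPartition ν) (hμν : SubShape μ ν) (hνlam : VertStrip ν lam) :
    ∑ y ∈ Finset.range (b - a + 1),
      it K t μ (fillColumn ν J a b (b - y)) * jt K t (fillColumn ν J a b (b - y)) lam = 0 := by
  have hab := hL.lt
  set c := nCols μ (fillColumn ν J a b a)
  set d := nCols (fillColumn ν J a b b) lam
  set m := skewSize (fillColumn ν J a b b) lam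
  have hdm : d ≤ m := nCols_le_skewSize (vertStrip_fillColumn hL hνlam b) hlam.finite_support
  have hfactor : ∀ {p q y : ℕ}, q ≤ y → t ^ (c + p) * ((-1) ^ (m + y) * t ^ (d + q) *
      (t - 1) ^ (m + y - (d + q))) = t ^ (c + d) * (-1) ^ m * (t - 1) ^ (m - d) *
        ((-1) ^ y * t ^ (p + q) * (t - 1) ^ (y - q)) := by
    intro p q y hqy
    rw [show m + y - (d + q) = m - d + (y - q) by omega]
    ring
  have hterm : ∀ y ∈ Finset.range (b - a + 1),
      it K t μ (fillColumn ν J a b (b - y)) * jt K t (fillColumn ν J a b (b - y)) lam =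
        t ^ (c + d) * (-1) ^ m * (t - 1) ^ (m - d) * columnWeight t (b - a) y := by
    intro y hy
    have hy : y ≤ b - a := Nat.lt_succ_iff.1 (Finset.mem_range.1 hy)
    have hp : (if a < b - y then 1 else 0) = if y < b - a then 1 else 0 := by split_ifs <;> omega
    have hq : (if b - y < b then 1 else 0) = if 0 < y then 1 else 0 := by split_ifs <;> omega
    rw [it, if_pos (subShape_fillColumn hL hμν _), jt, if_pos (vertStrip_fillColumn hL hνlam _),
      nCols_fillColumn_left hL hν hμν hνlam.1, nCols_fillColumn_right hL hlam hμν (by omega),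
      skewSize_fillColumn hL hlam hνlam (by omega), hp, hq, show b - (b - y) = y by omega,
      columnWeight]
    exact hfactor (by split_ifs <;> omega)
  rw [Finset.sum_congr rfl hterm, ← Finset.mul_sum, sum_range_columnWeight t (by omega),
    mul_zero]

end fillColumn

theorem sum_it_mul_jt (t : K) {μ lam : ℕ → ℕ} (hμ : IsPartition μ) (hlam : IsPartition lam)
    {S : Finset (ℕ → ℕ)} (hS : ∀ ν ∈ S, IsPartition ν)
    (hmem : ∀ ν, IsPartition ν → SubShape μ ν → SubShape ν lam → ν ∈ S) :
    ∑ ν ∈ S, it K t μ ν * jt K t ν lam = if μ = lam then 1 else 0 := by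
  by_cases heq : μ = lam
  · subst heq
    rw [if_pos rfl, Finset.sum_eq_single μ (fun ν _ hne => ?_)
      (fun h => absurd (hmem μ hμ (fun _ => le_rfl) fun _ => le_rfl) h), it_mul_jt_self]
    by_contra h
    obtain ⟨h₁, h₂⟩ := subShape_and_vertStrip_of_it_mul_jt_ne_zero h
    exact hne (h₂.1.antisymm h₁)
  rw [if_neg heq]
  by_cases hsub : SubShape μ lam
  swap
  · refine Finset.sum_eq_zero fun ν _ => ?_
    by_contra h
    obtain ⟨h₁, h₂⟩ := subShape_and_vertStrip_of_it_mul_jt_ne_zero h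
    exact hsub (h₁.trans h₂.1)
  obtain ⟨J, a, b, hL⟩ := exists_isLastColumn hμ hlam hsub heq
  set G := S.filter fun ν => SubShape μ ν ∧ VertStrip ν lam
  have hG : ∀ ν, ν ∈ G ↔ IsPartition ν ∧ SubShape μ ν ∧ VertStrip ν lam := fun ν => by
    simp only [G, Finset.mem_filter]
    exact ⟨fun h => ⟨hS ν h.1, h.2⟩, fun h => ⟨hmem ν h.1 h.2.1 h.2.2.1, h.2⟩⟩
  -- sum over the fibres of `ν ↦ fillColumn ν J a b b`, each of which contributes zero
  rw [← Finset.sum_filter_of_ne fun ν _ h => subShape_and_vertStrip_of_it_mul_jt_ne_zero h,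
    ← Finset.sum_image' (f := fun _ => (0 : K)) (g := fun ν => fillColumn ν J a b b) _
      fun ν hν => ?_, Finset.sum_const_zero]
  obtain ⟨hνp, hμν, hνlam⟩ := (hG ν).1 hν
  rw [filter_fillColumn_eq_image hL hG hν, Finset.sum_image (injOn_fillColumn_sub ν J a b),
    sum_range_it_mul_jt_fillColumn t hL hlam hνp hμν hνlam]

/-- In the incidence algebra of Young's lattice, the element
`i_t(μ,λ) = t^{c(λ/μ)}` has two-sided convolution inverse `j_t`:
`Σ_{μ⊆ν⊆λ} i_t(μ,ν) j_t(ν,λ) = δ_{μλ} = Σ_{μ⊆ν⊆λ} j_t(μ,ν) i_t(ν,λ)`. -/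
theorem incidence_inverse (t : K) (μ lam : ℕ → ℕ)
    (hμ : IsPartition μ) (hlam : IsPartition lam) (hsub : SubShape μ lam) :
    (∑ᶠ ν : ℕ → ℕ,
        if IsPartition ν ∧ SubShape μ ν ∧ SubShape ν lam then
          t ^ nCols μ ν * jt K t ν lam
        else 0) = (if μ = lam then (1 : K) else 0) ∧
    (∑ᶠ ν : ℕ → ℕ,
        if IsPartition ν ∧ SubShape μ ν ∧ SubShape ν lam then
          jt K t μ ν * t ^ nCols ν lam
        else 0) = (if μ = lam then (1 : K) else 0) := by
  have hfin : {ν | IsPartition ν ∧ SubShape μ ν ∧ SubShape ν lam}.Finite :=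
    (finite_setOf_subShape hlam.finite_support).subset fun _ hν => hν.2.2
  set I := hfin.toFinset
  have hI : ∀ ν, ν ∈ I ↔ IsPartition ν ∧ SubShape μ ν ∧ SubShape ν lam := fun _ =>
    hfin.mem_toFinset
  have hinv : ∀ ρ ∈ I, ∀ σ ∈ I, ∑ ν ∈ I, it K t ρ ν * jt K t ν σ = if ρ = σ then 1 else 0 := by
    intro ρ hρ σ hσ
    rw [hI] at hρ hσ
    exact sum_it_mul_jt t hρ.1 hσ.1 (fun ν hν => ((hI ν).1 hν).1) fun ν hν hρν hνσ =>
      (hI ν).2 ⟨hν, hρ.2.1.trans hρν, hνσ.trans hσ.2.2⟩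
  have hμI : μ ∈ I := (hI μ).2 ⟨hμ, fun _ => le_rfl, hsub⟩
  have hlamI : lam ∈ I := (hI lam).2 ⟨hlam, hsub, fun _ => le_rfl⟩
  rw [finsum_ite_eq_sum_toFinset hfin, finsum_ite_eq_sum_toFinset hfin]
  constructor
  · rw [← hinv μ hμI lam hlamI]
    exact Finset.sum_congr rfl fun ν hν => by rw [it, if_pos ((hI ν).1 hν).2.1]
  · rw [← sum_mul_eq_ite_of_sum_mul_eq_ite hinv hμI hlamI]
    exact Finset.sum_congr rfl fun ν hν => by rw [it, if_pos ((hI ν).1 hν).2.2]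
end
end
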